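/- arXiv:2009.05020 — 2 statements merged into one kernel-verified Lean document; each statement's English description precedes it below -/
import Mathlib

section
/- Let p⃗ be a 1×r vector polynomial of degree at most m and v : ℤ → ℂ^{1×r} a finitely supported vector sequence. Then p⃗ = (·)^m/m! * v (i.e., p⃗(x) = ∑_{k∈ℤ} ((x−k)^m/m!) v(k)) if and only if v̂^{(j)}(0) = j! · i^j · p⃗^{(m−j)}(0) for all j = 0, 1, …, m. -/
open Complex Polynomial

/-- Symbol (Fourier series) of a sequence `u : ℤ → ℂ`. -/
noncomputable def symb (u : ℤ → ℂ) (ξ : ℂ) : ℂ :=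
  ∑ᶠ k : ℤ, u k * Complex.exp (-Complex.I * k * ξ)

/-- Convolution of a polynomial with a finitely supported sequence, as a polynomial. -/
noncomputable def pconv (q : Polynomial ℂ) (u : ℤ → ℂ) : Polynomial ℂ :=
  ∑ᶠ k : ℤ, u k • (q.comp (Polynomial.X - Polynomial.C (k : ℂ)))

/-!
Both sides are moment conditions on `v`. Differentiating the symbol `j` times at `0` gives
`∑ₖ v(k) (-ik)^j`, while the `(m-j)`-th derivative at `0` of `∑ₖ v(k) (x-k)^m / m!` is
`∑ₖ v(k) (-k)^j / j!`; so the convolution `Q` satisfies the stated identities, and these say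
exactly that `p⃗` and `Q` have the same derivatives of orders `0, …, m` at `0`. Two polynomials
of degree at most `m` with this property coincide.
-/

open Function Nat

theorem Polynomial.iterate_derivative_eval_zero {R : Type*} [Semiring R] (p : R[X]) (n : ℕ) :
    (derivative^[n] p).eval 0 = n ! * p.coeff n := by
  rw [← coeff_zero_eq_eval_zero, coeff_iterate_derivative, zero_add, descFactorial_self,
    nsmul_eq_mul]

theorem Polynomial.eq_of_iterate_derivative_eval_zero_eq {R : Type*} [Ring R] [IsDomain R]
    [CharZero R] {p q : R[X]} {m : ℕ} (hp : p.natDegree ≤ m) (hq : q.natDegree ≤ m)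
    (h : ∀ i ≤ m, (derivative^[i] p).eval 0 = (derivative^[i] q).eval 0) : p = q := by
  ext n
  by_cases hn : n ≤ m
  · have hderiv := h n hn
    rw [iterate_derivative_eval_zero, iterate_derivative_eval_zero] at hderiv
    exact mul_left_cancel₀ (cast_ne_zero.mpr n.factorial_ne_zero) hderiv
  · rw [coeff_eq_zero_of_natDegree_lt (by omega), coeff_eq_zero_of_natDegree_lt (by omega)]

section

variable {u : ℤ → ℂ} {S : Finset ℤ}

theorem symb_eq_sum (hS : support u ⊆ S) :
    symb u = fun ξ => ∑ k ∈ S, u k * exp (-I * k * ξ) :=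
  funext fun _ => finsum_eq_sum_of_support_subset _ ((support_mul_subset_left _ _).trans hS)

theorem iteratedDeriv_symb_zero (hS : support u ⊆ S) (j : ℕ) :
    iteratedDeriv j (symb u) 0 = ∑ k ∈ S, u k * (-I * k) ^ j := by
  rw [symb_eq_sum hS, iteratedDeriv_fun_sum fun k _ => by fun_prop]
  refine Finset.sum_congr rfl fun k _ => ?_
  rw [iteratedDeriv_const_mul_field, iteratedDeriv_cexp_const_mul]
  simp

theorem pconv_eq_sum (q : ℂ[X]) (hS : support u ⊆ S) :
    pconv q u = ∑ k ∈ S, u k • q.comp (X - C (k : ℂ)) :=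
  finsum_eq_sum_of_support_subset _ ((support_smul_subset_left _ _).trans hS)

theorem natDegree_pconv_le (q : ℂ[X]) (hS : support u ⊆ S) :
    (pconv q u).natDegree ≤ q.natDegree := by
  rw [pconv_eq_sum q hS]
  refine natDegree_sum_le_of_forall_le _ _ fun k _ => (natDegree_smul_le _ _).trans ?_
  refine natDegree_comp_le.trans ?_
  rw [natDegree_X_sub_C, mul_one]

theorem iterate_derivative_pconv_monomial_eval_zero (hS : support u ⊆ S) {m j : ℕ}
    (hj : j ≤ m) :
    (j ! : ℂ) * I ^ j * (derivative^[m - j] (pconv (C (m ! : ℂ)⁻¹ * X ^ m) u)).eval 0 =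
      ∑ k ∈ S, u k * (-I * k) ^ j := by
  rw [pconv_eq_sum _ hS, iterate_derivative_sum, eval_finsetSum, Finset.mul_sum]
  refine Finset.sum_congr rfl fun k _ => ?_
  rw [mul_comp, C_comp, pow_comp, X_comp, iterate_derivative_smul, iterate_derivative_C_mul,
    iterate_derivative_X_sub_pow, Nat.sub_sub_self hj]
  have hfact : (j ! : ℂ) * (m ! : ℂ)⁻¹ * (m.descFactorial (m - j) : ℂ) = 1 := by
    have h := factorial_mul_descFactorial (Nat.sub_le m j)
    rw [Nat.sub_sub_self hj] at h
    rw [mul_right_comm, ← cast_mul, h]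
    exact mul_inv_cancel₀ (cast_ne_zero.mpr (factorial_ne_zero m))
  simp only [eval_smul, eval_mul, eval_pow, eval_sub, eval_X, eval_C, zero_sub, smul_eq_mul,
    nsmul_eq_mul, eval_natCast]
  linear_combination (u k * I ^ j * (-(k : ℂ)) ^ j) * hfact

theorem iteratedDeriv_symb_zero_eq_pconv_monomial (hu : (support u).Finite) {m j : ℕ}
    (hj : j ≤ m) :
    iteratedDeriv j (symb u) 0 =
      (j ! : ℂ) * I ^ j * (derivative^[m - j] (pconv (C (m ! : ℂ)⁻¹ * X ^ m) u)).eval 0 := by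
  rw [iteratedDeriv_symb_zero hu.coe_toFinset.superset,
    iterate_derivative_pconv_monomial_eval_zero hu.coe_toFinset.superset hj]

theorem eq_pconv_monomial_iff (hu : (support u).Finite) {m : ℕ} {p : ℂ[X]}
    (hp : p.natDegree ≤ m) :
    p = pconv (C (m ! : ℂ)⁻¹ * X ^ m) u ↔
      ∀ j ≤ m,
        iteratedDeriv j (symb u) 0 = (j ! : ℂ) * I ^ j * (derivative^[m - j] p).eval 0 := by
  set Q := pconv (C (m ! : ℂ)⁻¹ * X ^ m) u
  have hQ : Q.natDegree ≤ m :=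
    (natDegree_pconv_le _ hu.coe_toFinset.superset).trans (natDegree_C_mul_X_pow_le _ _)
  calc p = Q ↔ ∀ i ≤ m, (derivative^[i] p).eval 0 = (derivative^[i] Q).eval 0 :=
        ⟨fun h _ _ => h ▸ rfl, eq_of_iterate_derivative_eval_zero_eq hp hQ⟩
    _ ↔ ∀ j ≤ m, (derivative^[m - j] p).eval 0 = (derivative^[m - j] Q).eval 0 :=
        ⟨fun h j _ => h _ (sub_le m j),
          fun h i hi => by simpa only [Nat.sub_sub_self hi] using h (m - i) (sub_le m i)⟩
    _ ↔ _ := forall₂_congr fun j hj => by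
        have hcoeff : (j ! : ℂ) * I ^ j ≠ 0 :=
          mul_ne_zero (cast_ne_zero.mpr (factorial_ne_zero j)) (pow_ne_zero _ I_ne_zero)
        rw [iteratedDeriv_symb_zero_eq_pconv_monomial hu hj, eq_comm, mul_right_inj' hcoeff]

end

/-- `p⃗ = ((·)^m / m!) * v` iff `v̂^{(j)}(0) = j! i^j p⃗^{(m−j)}(0)` for `j = 0,…,m`. -/
theorem stmt3 (r : ℕ) (v : ℤ → Fin r → ℂ) (hv : (Function.support v).Finite)
    (m : ℕ) (P : Fin r → Polynomial ℂ) (hP : ∀ ℓ, (P ℓ).natDegree ≤ m) :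
    (∀ ℓ, P ℓ = pconv (Polynomial.C ((Nat.factorial m : ℂ))⁻¹ * Polynomial.X ^ m)
        (fun k => v k ℓ)) ↔
      ∀ j ≤ m, ∀ ℓ,
        iteratedDeriv j (symb (fun k => v k ℓ)) 0 =
          (Nat.factorial j : ℂ) * Complex.I ^ j *
            (Polynomial.derivative^[m - j] (P ℓ)).eval 0 := by
  have hvℓ : ∀ ℓ, (support fun k => v k ℓ).Finite := fun ℓ =>
    hv.subset fun k hk hvk => hk (congrFun hvk ℓ)
  simp only [fun ℓ => eq_pconv_monomial_iff (hvℓ ℓ) (hP ℓ)]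
  exact ⟨fun h j hj ℓ => h ℓ j hj, fun h ℓ j hj => h j hj ℓ⟩
end

section
/- Let r ∈ ℕ, m ≥ r−1, and let a : ℤ → ℂ^{r×r} be a finitely supported interpolatory Hermite mask, i.e., a(0) = diag(2^{-1},…,2^{-r}) and a(2k) = 0 for k ≠ 0. Suppose a has order m+1 sum rules with respect to some finitely supported υ : ℤ → ℂ^{1×r} satisfying υ̂(ξ) = (1+O(|ξ|), iξ+O(|ξ|^2), …, (iξ)^{r-1}+O(|ξ|^r)) as ξ → 0. Then necessarily υ̂(ξ) = (1, iξ, (iξ)^2, …, (iξ)^{r-1}) + O(|ξ|^{m+1}) as ξ → 0. -/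
/-!
Adding the two sum rules, the coset identity `â(ξ) + â(ξ + π) = 2 a(0)` of an interpolatory mask
turns column `ℓ` into `2^{-ℓ} υ̂_ℓ(2ξ) - υ̂_ℓ(ξ) = O(|ξ|^{m+1})`. Since `(iξ)^ℓ` solves the same
refinement equation exactly, `g := υ̂_ℓ - (i·)^ℓ` satisfies `2^{-ℓ} g(2ξ) - g(ξ) = O(|ξ|^{m+1})`,
whose `j`-th Taylor coefficient is `(2^{j-ℓ} - 1) g^{(j)}(0)`. Hence `g^{(j)}(0) = 0` for
`j ≠ ℓ`, and the case `j = ℓ` is the normalisation of `υ̂_ℓ`.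
-/

open Complex

/-- Entrywise symbol of a matrix-valued sequence. -/
noncomputable def symbM {r : ℕ} (a : ℤ → Fin r → Fin r → ℂ) (i ℓ : Fin r) (ξ : ℂ) : ℂ :=
  ∑ᶠ k : ℤ, a k i ℓ * Complex.exp (-Complex.I * k * ξ)

lemma Set.Finite.support_apply {α β M : Type*} [Zero M] {f : α → β → M}
    (hf : f.support.Finite) (b : β) : (fun x => f x b).support.Finite :=
  hf.subset (Function.support_comp_subset (g := fun x : β → M => x b) rfl f)

lemma symb_eq_finset_sum {u : ℤ → ℂ} (hu : u.support.Finite) (ξ : ℂ) :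
    symb u ξ = ∑ k ∈ hu.toFinset, u k * exp (-I * k * ξ) :=
  finsum_eq_finsetSum_of_support_subset _ fun k hk => by
    simpa using left_ne_zero_of_mul hk

lemma contDiff_symb {u : ℤ → ℂ} (hu : u.support.Finite) {n : WithTop ℕ∞} :
    ContDiff ℂ n (symb u) := by
  rw [funext (symb_eq_finset_sum hu)]
  fun_prop

lemma exp_neg_I_mul_int_mul_add_pi (k : ℤ) (ξ : ℂ) :
    exp (-I * k * (ξ + (Real.pi : ℂ))) = (-1) ^ k * exp (-I * k * ξ) := by
  have hπ : exp (-(Real.pi * I)) = -1 := by rw [exp_neg, exp_pi_mul_I]; norm_num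
  rw [show -I * k * (ξ + (Real.pi : ℂ)) = k * (-(Real.pi * I)) + -I * k * ξ by ring, exp_add,
    exp_int_mul, hπ]

lemma symb_add_symb_add_pi {b : ℤ → ℂ} (hb : b.support.Finite)
    (h_even : ∀ k : ℤ, k ≠ 0 → b (2 * k) = 0) (ξ : ℂ) :
    symb b ξ + symb b (ξ + (Real.pi : ℂ)) = 2 * b 0 := by
  have hfin : ∀ ζ : ℂ, (Function.support fun k : ℤ => b k * exp (-I * k * ζ)).Finite :=
    fun ζ => hb.subset fun k hk => left_ne_zero_of_mul hk
  rw [symb, symb, ← finsum_add_distrib (hfin ξ) (hfin _), finsum_eq_single _ 0]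
  · simp only [Int.cast_zero, mul_zero, zero_mul, exp_zero, mul_one]
    ring
  intro k hk
  rw [exp_neg_I_mul_int_mul_add_pi]
  rcases Int.even_or_odd' k with ⟨t, rfl | rfl⟩
  · rw [h_even t (by rintro rfl; simp at hk)]; ring
  · rw [Odd.neg_one_zpow ⟨t, rfl⟩]; ring

lemma iteratedDeriv_const_mul_comp_const_mul_sub_zero {𝕜 : Type*} [NontriviallyNormedField 𝕜]
    {f : 𝕜 → 𝕜} {n : ℕ} (hf : ContDiff 𝕜 n f) (c s : 𝕜) :
    iteratedDeriv n (fun x => c * f (s * x) - f x) 0 = (c * s ^ n - 1) * iteratedDeriv n f 0 := by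
  rw [iteratedDeriv_fun_sub (by fun_prop) hf.contDiffAt, iteratedDeriv_const_mul_field,
    iteratedDeriv_comp_const_mul hf]
  simp only [mul_zero]
  ring

lemma two_pow_inv_mul_two_pow_sub_one_ne_zero {j ℓ : ℕ} (h : j ≠ ℓ) :
    ((2 : ℂ) ^ ℓ)⁻¹ * 2 ^ j - 1 ≠ 0 := by
  rw [sub_ne_zero, Ne, inv_mul_eq_one₀ (pow_ne_zero _ two_ne_zero)]
  exact_mod_cast (Nat.pow_right_injective le_rfl).ne h.symm

section InterpolatoryMask

variable {r : ℕ} {a : ℤ → Fin r → Fin r → ℂ}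

lemma sum_mul_symbM_add_sum_mul_symbM_add_pi (ha : a.support.Finite)
    (hint0 : ∀ i j : Fin r, a 0 i j = if i = j then ((2 : ℂ) ^ ((i : ℕ) + 1))⁻¹ else 0)
    (hint : ∀ k : ℤ, k ≠ 0 → ∀ i j : Fin r, a (2 * k) i j = 0)
    (w : Fin r → ℂ) (ℓ : Fin r) (ξ : ℂ) :
    ∑ i, w i * symbM a i ℓ ξ + ∑ i, w i * symbM a i ℓ (ξ + (Real.pi : ℂ)) =
      ((2 : ℂ) ^ (ℓ : ℕ))⁻¹ * w ℓ := by
  have hcoset : ∀ i, symbM a i ℓ ξ + symbM a i ℓ (ξ + (Real.pi : ℂ)) = 2 * a 0 i ℓ :=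
    fun i => symb_add_symb_add_pi ((ha.support_apply i).support_apply ℓ)
      (fun k hk => hint k hk i ℓ) ξ
  simp only [← Finset.sum_add_distrib, ← mul_add, hcoset, hint0, mul_ite, mul_zero,
    Finset.sum_ite_eq', Finset.mem_univ, if_true]
  ring

lemma sumRule_add_sumRule_add_pi_eq (ha : a.support.Finite)
    (hint0 : ∀ i j : Fin r, a 0 i j = if i = j then ((2 : ℂ) ^ ((i : ℕ) + 1))⁻¹ else 0)
    (hint : ∀ k : ℤ, k ≠ 0 → ∀ i j : Fin r, a (2 * k) i j = 0)
    (v : Fin r → ℂ → ℂ) (ℓ : Fin r) (ξ : ℂ) :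
    ((∑ i, v i (2 * ξ) * symbM a i ℓ ξ) - v ℓ ξ) +
        ∑ i, v i (2 * ξ) * symbM a i ℓ (ξ + (Real.pi : ℂ)) =
      ((2 : ℂ) ^ (ℓ : ℕ))⁻¹ * (v ℓ (2 * ξ) - (I * (2 * ξ)) ^ (ℓ : ℕ)) -
        (v ℓ ξ - (I * ξ) ^ (ℓ : ℕ)) := by
  have hmonomial : ((2 : ℂ) ^ (ℓ : ℕ))⁻¹ * (I * (2 * ξ)) ^ (ℓ : ℕ) = (I * ξ) ^ (ℓ : ℕ) := by
    rw [mul_left_comm, mul_pow, inv_mul_cancel_left₀ (pow_ne_zero _ two_ne_zero)]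
  linear_combination
    sum_mul_symbM_add_sum_mul_symbM_add_pi ha hint0 hint (fun i => v i (2 * ξ)) ℓ ξ + hmonomial

end InterpolatoryMask

theorem stmt18_general (r : ℕ) (m : ℕ)
    (a : ℤ → Fin r → Fin r → ℂ) (ha : (Function.support a).Finite)
    (hint0 : ∀ i j : Fin r, a 0 i j = if i = j then ((2 : ℂ) ^ ((i : ℕ) + 1))⁻¹ else 0)
    (hint : ∀ k : ℤ, k ≠ 0 → ∀ i j : Fin r, a (2 * k) i j = 0)
    (υ : ℤ → Fin r → ℂ) (hυ : (Function.support υ).Finite)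
    (hsr1 : ∀ j ≤ m, ∀ ℓ : Fin r,
      iteratedDeriv j
        (fun ξ : ℂ => (∑ i : Fin r, symb (fun k => υ k i) (2 * ξ) * symbM a i ℓ ξ) -
          symb (fun k => υ k ℓ) ξ) 0 = 0)
    (hsr2 : ∀ j ≤ m, ∀ ℓ : Fin r,
      iteratedDeriv j
        (fun ξ : ℂ => ∑ i : Fin r, symb (fun k => υ k i) (2 * ξ) *
          symbM a i ℓ (ξ + (Real.pi : ℂ))) 0 = 0)
    (hυform : ∀ ℓ : Fin r, ∀ j ≤ (ℓ : ℕ),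
      iteratedDeriv j
        (fun ξ : ℂ => symb (fun k => υ k ℓ) ξ - (Complex.I * ξ) ^ ((ℓ : ℕ))) 0 = 0) :
    ∀ ℓ : Fin r, ∀ j ≤ m,
      iteratedDeriv j
        (fun ξ : ℂ => symb (fun k => υ k ℓ) ξ - (Complex.I * ξ) ^ ((ℓ : ℕ))) 0 = 0 := by
  intro ℓ j hj
  rcases eq_or_ne j ℓ with rfl | hjℓ
  · exact hυform ℓ ℓ le_rfl
  have hυi : ∀ i, ContDiff ℂ j (symb fun k => υ k i) := fun i =>
    contDiff_symb (hυ.support_apply i)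
  have hai : ∀ i, ContDiff ℂ j (symbM a i ℓ) := fun i =>
    contDiff_symb ((ha.support_apply i).support_apply ℓ)
  have hdefect := congrFun (congrArg (iteratedDeriv j)
    (funext (sumRule_add_sumRule_add_pi_eq ha hint0 hint (fun i => symb fun k => υ k i) ℓ))) 0
  rw [iteratedDeriv_fun_add (by fun_prop) (by fun_prop), hsr1 j hj ℓ, hsr2 j hj ℓ, add_zero,
    iteratedDeriv_const_mul_comp_const_mul_sub_zero
      (f := fun ξ => symb (fun k => υ k ℓ) ξ - (I * ξ) ^ (ℓ : ℕ)) (by fun_prop)] at hdefect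
  exact (mul_eq_zero.mp hdefect.symm).resolve_left (two_pow_inv_mul_two_pow_sub_one_ne_zero hjℓ)

/-- for an interpolatory Hermite mask with order `m+1` sum rules whose
matching filter satisfies `υ̂(ξ) = (1+O(|ξ|), iξ+O(|ξ|²), …, (iξ)^{r-1}+O(|ξ|^r))`,
necessarily `υ̂(ξ) = (1, iξ, …, (iξ)^{r-1}) + O(|ξ|^{m+1})`. -/
theorem stmt18 (r : ℕ) (hr : 0 < r) (m : ℕ) (hm : r - 1 ≤ m)
    (a : ℤ → Fin r → Fin r → ℂ) (ha : (Function.support a).Finite)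
    (hint0 : ∀ i j : Fin r, a 0 i j = if i = j then ((2 : ℂ) ^ ((i : ℕ) + 1))⁻¹ else 0)
    (hint : ∀ k : ℤ, k ≠ 0 → ∀ i j : Fin r, a (2 * k) i j = 0)
    (υ : ℤ → Fin r → ℂ) (hυ : (Function.support υ).Finite)
    (hsr1 : ∀ j ≤ m, ∀ ℓ : Fin r,
      iteratedDeriv j
        (fun ξ : ℂ => (∑ i : Fin r, symb (fun k => υ k i) (2 * ξ) * symbM a i ℓ ξ) -
          symb (fun k => υ k ℓ) ξ) 0 = 0)
    (hsr2 : ∀ j ≤ m, ∀ ℓ : Fin r,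
      iteratedDeriv j
        (fun ξ : ℂ => ∑ i : Fin r, symb (fun k => υ k i) (2 * ξ) *
          symbM a i ℓ (ξ + (Real.pi : ℂ))) 0 = 0)
    (hυform : ∀ ℓ : Fin r, ∀ j ≤ (ℓ : ℕ),
      iteratedDeriv j
        (fun ξ : ℂ => symb (fun k => υ k ℓ) ξ - (Complex.I * ξ) ^ ((ℓ : ℕ))) 0 = 0) :
    ∀ ℓ : Fin r, ∀ j ≤ m,
      iteratedDeriv j
        (fun ξ : ℂ => symb (fun k => υ k ℓ) ξ - (Complex.I * ξ) ^ ((ℓ : ℕ))) 0 = 0 :=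
  stmt18_general r m a ha hint0 hint υ hυ hsr1 hsr2 hυform
end
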